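/- Let Q be a finite quiver and 𝕂Q̄ its doubled path algebra with the standard double Poisson bracket. Then: (1) the element w := Σ_{a∈Q}(aa* − a*a) is a noncommutative moment map, i.e. ⦃w,p⦄ = Σ_{i∈Q₀}(pe_i⊗e_i − e_i⊗e_ip) for every p ∈ 𝕂Q̄; (2) consequently, the necklace Lie bracket on HH₀(𝕂Q̄) descends to a Lie bracket on HH₀(ΠQ), where ΠQ := 𝕂Q̄/(𝕂Q̄ w 𝕂Q̄) is the preprojective algebra, and the projection HH₀(𝕂Q̄) → HH₀(ΠQ) is a Lie algebra homomorphism. -/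

import Mathlib

/-! STATEMENT 7: (1) w = Σ_{a∈Q}(aa* − a*a) is a noncommutative moment map for the
standard double Poisson bracket on 𝕂Q̄; (2) consequently the necklace Lie bracket on
HH₀(𝕂Q̄) descends to HH₀(ΠQ) for the preprojective algebra ΠQ = 𝕂Q̄/(𝕂Q̄w𝕂Q̄), and the
projection HH₀(𝕂Q̄) → HH₀(ΠQ) is a Lie algebra homomorphism.
We model HH₀(ΠQ) as 𝕂Q̄/([𝕂Q̄,𝕂Q̄] + 𝕂Q̄w𝕂Q̄). -/

open TensorProduct

noncomputable section

variable (K : Type) [Field K]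

/-- The cyclic permutation `x ⊗ y ⊗ z ↦ y ⊗ z ⊗ x` on the triple tensor product. -/
def cyc132 (A : Type) [Ring A] [Algebra K A] :
    A ⊗[K] (A ⊗[K] A) →ₗ[K] A ⊗[K] (A ⊗[K] A) :=
  (TensorProduct.assoc K A A A).toLinearMap ∘ₗ
    (TensorProduct.comm K A (A ⊗[K] A)).toLinearMap

/-- `⦃b, u ⊗ v⦄_L = ⦃b, u⦄ ⊗ v`. -/
def brExtL (A : Type) [Ring A] [Algebra K A]
    (f : A →ₗ[K] A ⊗[K] A) : A ⊗[K] A →ₗ[K] A ⊗[K] (A ⊗[K] A) :=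
  (TensorProduct.assoc K A A A).toLinearMap ∘ₗ TensorProduct.map f LinearMap.id

/-- Outer bimodule structure: left multiplication `b · (u ⊗ v) = bu ⊗ v`. -/
def outL (A : Type) [Ring A] [Algebra K A] (b : A) :
    A ⊗[K] A →ₗ[K] A ⊗[K] A :=
  TensorProduct.map (LinearMap.mulLeft K b) LinearMap.id

/-- Outer bimodule structure: right multiplication `(u ⊗ v) · c = u ⊗ vc`. -/
def outR (A : Type) [Ring A] [Algebra K A] (c : A) :
    A ⊗[K] A →ₗ[K] A ⊗[K] A :=
  TensorProduct.map LinearMap.id (LinearMap.mulRight K c)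

/-- A double Poisson bracket (Van den Bergh) on an `R`-algebra `A`,
where `R = ⊕_{i ∈ I} 𝕂 e_i` is encoded by the family of idempotents `e : I → A`;
`R`-bilinearity is encoded by the vanishing `⦃e_i, -⦄ = 0`. -/
structure DoubleBracket (I : Type) (A : Type) [Ring A] [Algebra K A] (e : I → A) where
  br : A →ₗ[K] A →ₗ[K] A ⊗[K] A
  skew : ∀ a b : A, br a b = - (TensorProduct.comm K A A) (br b a)
  leibniz : ∀ a b c : A,
    br a (b * c) = outR K A c (br a b) + outL K A b (br a c)
  jacobi : ∀ a b c : A,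
    brExtL K A (br a) (br b c)
      + cyc132 K A (brExtL K A (br c) (br a b))
      + cyc132 K A (cyc132 K A (brExtL K A (br b) (br c a))) = 0
  e_vanish : ∀ (i : I) (a : A), br (e i) a = 0

/-- The span of commutators `[A,A]`. -/
def commSpan (A : Type) [Ring A] [Algebra K A] : Submodule K A :=
  Submodule.span K {x : A | ∃ a b : A, x = a * b - b * a}

/-- Zeroth Hochschild homology `HH₀(A) = A/[A,A]`. -/
abbrev HH0 (A : Type) [Ring A] [Algebra K A] := A ⧸ commSpan K A

section PathAlgebra

/- A finite quiver `Q`: vertex set `V`, arrow set `E`, source `Qs`, target `Qt`.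
The doubled quiver `Q̄` has arrows `E ⊕ E`: `Sum.inl a = a` and `Sum.inr a = a*`. -/
variable (V E : Type) [Fintype V] [DecidableEq V] [Fintype E] [DecidableEq E]
variable (Qs Qt : E → V)

/-- Source of a doubled arrow. -/
def sbar : E ⊕ E → V := Sum.elim Qs Qt

/-- Target of a doubled arrow. -/
def tbar : E ⊕ E → V := Sum.elim Qt Qs

/-- The involution `a ↦ a*`, `a* ↦ a` on doubled arrows. -/
def dstar : E ⊕ E → E ⊕ E := Sum.elim Sum.inr Sum.inl

/-- The defining relations of the path algebra of the doubled quiver `Q̄`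
(products of paths compose like functions: in `x * y` the path `y` comes first). -/
inductive PathRel :
    FreeAlgebra K (V ⊕ (E ⊕ E)) → FreeAlgebra K (V ⊕ (E ⊕ E)) → Prop
  | vert_mul (i j : V) :
      PathRel (FreeAlgebra.ι K (Sum.inl i) * FreeAlgebra.ι K (Sum.inl j))
        (if i = j then FreeAlgebra.ι K (Sum.inl i) else 0)
  | vert_sum :
      PathRel (Finset.univ.sum fun i : V => FreeAlgebra.ι K (Sum.inl i)) 1
  | arr_left (x : E ⊕ E) :
      PathRel (FreeAlgebra.ι K (Sum.inl (tbar V E Qs Qt x)) * FreeAlgebra.ι K (Sum.inr x))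
        (FreeAlgebra.ι K (Sum.inr x))
  | arr_right (x : E ⊕ E) :
      PathRel (FreeAlgebra.ι K (Sum.inr x) * FreeAlgebra.ι K (Sum.inl (sbar V E Qs Qt x)))
        (FreeAlgebra.ι K (Sum.inr x))

/-- The path algebra `𝕂Q̄` of the doubled quiver, presented by generators and relations. -/
abbrev PathAlg := RingQuot (PathRel K V E Qs Qt)

/-- The trivial path (idempotent) `e_i` at a vertex `i`. -/
def vtx (i : V) : PathAlg K V E Qs Qt :=
  RingQuot.mkAlgHom K (PathRel K V E Qs Qt) (FreeAlgebra.ι K (Sum.inl i))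

/-- The element of `𝕂Q̄` given by a doubled arrow. -/
def arr (x : E ⊕ E) : PathAlg K V E Qs Qt :=
  RingQuot.mkAlgHom K (PathRel K V E Qs Qt) (FreeAlgebra.ι K (Sum.inr x))

/-- The standard noncommutative moment map `w = Σ_{a ∈ Q} (a a* − a* a)` of `𝕂Q̄`. -/
def ncw : PathAlg K V E Qs Qt :=
  Finset.univ.sum fun a : E =>
    arr K V E Qs Qt (Sum.inl a) * arr K V E Qs Qt (Sum.inr a)
      - arr K V E Qs Qt (Sum.inr a) * arr K V E Qs Qt (Sum.inl a)

/-- The condition that a double bracket on `𝕂Q̄` is the standard one: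
`⦃a,a*⦄ = e_{s(a)} ⊗ e_{t(a)}`, `⦃a*,a⦄ = −e_{t(a)} ⊗ e_{s(a)}`, and `⦃f,g⦄ = 0`
for arrows `f ≠ g*`. -/
def IsQuiverBracket (D : DoubleBracket K V (PathAlg K V E Qs Qt) (vtx K V E Qs Qt)) :
    Prop :=
  (∀ a : E,
    D.br (arr K V E Qs Qt (Sum.inl a)) (arr K V E Qs Qt (Sum.inr a))
      = vtx K V E Qs Qt (Qs a) ⊗ₜ[K] vtx K V E Qs Qt (Qt a))
  ∧ (∀ a : E,
    D.br (arr K V E Qs Qt (Sum.inr a)) (arr K V E Qs Qt (Sum.inl a))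
      = - (vtx K V E Qs Qt (Qt a) ⊗ₜ[K] vtx K V E Qs Qt (Qs a)))
  ∧ (∀ f g : E ⊕ E, f ≠ dstar E g →
      D.br (arr K V E Qs Qt f) (arr K V E Qs Qt g) = 0)

end PathAlgebra

/-- The submodule `[A,A] + AwA` of `A`; `A/([A,A]+AwA)` models `HH₀(A/AwA)`. -/
def redSpan (A : Type) [Ring A] [Algebra K A] (w : A) : Submodule K A :=
  commSpan K A ⊔ Submodule.span K {x : A | ∃ u v : A, x = u * w * v}


/-! ### Auxiliary lemmas -/

set_option maxHeartbeats 1000000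
set_option synthInstance.maxHeartbeats 400000

section AuxGeneral

variable {A : Type} [Ring A] [Algebra K A]

lemma mem_commSpan_mul (a b : A) : a * b - b * a ∈ commSpan K A :=
  Submodule.subset_span ⟨a, b, rfl⟩

lemma mul'_comm_sub (T : A ⊗[K] A) :
    LinearMap.mul' K A ((TensorProduct.comm K A A) T) - LinearMap.mul' K A T
      ∈ commSpan K A := by
  induction T using TensorProduct.induction_on with
  | zero => simpa using Submodule.zero_mem _
  | tmul x y => simpa using mem_commSpan_mul K y x
  | add x y hx hy =>
      rw [map_add, map_add, map_add, add_sub_add_comm]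
      exact Submodule.add_mem _ hx hy

lemma mul'_outR_sub_outL (c : A) (T : A ⊗[K] A) :
    LinearMap.mul' K A (outR K A c T) - LinearMap.mul' K A (outL K A c T)
      ∈ commSpan K A := by
  induction T using TensorProduct.induction_on with
  | zero => simpa using Submodule.zero_mem _
  | tmul x y =>
      have h : LinearMap.mul' K A (outR K A c (x ⊗ₜ[K] y))
          - LinearMap.mul' K A (outL K A c (x ⊗ₜ[K] y)) = (x * y) * c - c * (x * y) := by
        simp [outR, outL, mul_assoc]
      rw [h]; exact mem_commSpan_mul K (x * y) c
  | add x y hx hy =>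
      simp only [map_add, add_sub_add_comm]
      exact Submodule.add_mem _ hx hy

lemma comm_outR_comm (v : A) (T : A ⊗[K] A) :
    (TensorProduct.comm K A A) (outR K A v ((TensorProduct.comm K A A) T))
      = TensorProduct.map (LinearMap.mulRight K v) LinearMap.id T := by
  induction T using TensorProduct.induction_on with
  | zero => simp
  | tmul x y => simp [outR]
  | add x y hx hy => rw [map_add, map_add, map_add, map_add, hx, hy]

lemma comm_outL_comm (u : A) (T : A ⊗[K] A) :
    (TensorProduct.comm K A A) (outL K A u ((TensorProduct.comm K A A) T))
      = TensorProduct.map LinearMap.id (LinearMap.mulLeft K u) T := by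
  induction T using TensorProduct.induction_on with
  | zero => simp
  | tmul x y => simp [outL]
  | add x y hx hy => rw [map_add, map_add, map_add, map_add, hx, hy]

variable {I : Type} {e : I → A}

lemma br_one_right (D : DoubleBracket K I A e) (x : A) : D.br x 1 = 0 := by
  have houtR : outR K A (1 : A) (D.br x 1) = D.br x 1 := by
    have : outR K A (1 : A) = (LinearMap.id : A ⊗[K] A →ₗ[K] A ⊗[K] A) := by
      apply TensorProduct.ext'
      intro a b
      simp [outR]
    rw [this]; rfl
  have houtL : outL K A (1 : A) (D.br x 1) = D.br x 1 := by
    have : outL K A (1 : A) = (LinearMap.id : A ⊗[K] A →ₗ[K] A ⊗[K] A) := by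
      apply TensorProduct.ext'
      intro a b
      simp [outL]
    rw [this]; rfl
  have h := D.leibniz x 1 1
  rw [one_mul, houtR, houtL] at h
  exact left_eq_add.mp h

lemma br_one_left (D : DoubleBracket K I A e) (x : A) : D.br 1 x = 0 := by
  rw [D.skew 1 x, br_one_right, map_zero, neg_zero]

lemma br_fst (D : DoubleBracket K I A e) (u v p : A) :
    D.br (u * v) p
      = TensorProduct.map (LinearMap.mulRight K v) LinearMap.id (D.br u p)
        + TensorProduct.map LinearMap.id (LinearMap.mulLeft K u) (D.br v p) := by
  rw [D.skew (u * v) p, D.leibniz p u v, D.skew p u, D.skew p v]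
  simp only [map_neg, map_add, neg_add, neg_neg]
  rw [comm_outR_comm, comm_outL_comm]

end AuxGeneral

section AuxAlt

variable {A : Type} [Ring A] [Algebra K A]

/-- The span of antisymmetric elementary tensors. -/
def altSpan : Submodule K (A ⊗[K] A) :=
  Submodule.span K {T : A ⊗[K] A | ∃ u v : A, T = u ⊗ₜ[K] v - v ⊗ₜ[K] u}

lemma sub_comm_mem_altSpan (T : A ⊗[K] A) :
    T - (TensorProduct.comm K A A) T ∈ altSpan K (A := A) := by
  induction T using TensorProduct.induction_on with
  | zero => simpa using Submodule.zero_mem _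
  | tmul x y => exact Submodule.subset_span ⟨x, y, by simp⟩
  | add x y hx hy =>
      simp only [map_add, add_sub_add_comm]
      exact Submodule.add_mem _ hx hy

lemma map_map_mem_altSpan (f : A →ₗ[K] A) {T : A ⊗[K] A} (hT : T ∈ altSpan K (A := A)) :
    TensorProduct.map f f T ∈ altSpan K (A := A) := by
  induction hT using Submodule.span_induction with
  | mem x hx =>
      obtain ⟨u, v, rfl⟩ := hx
      exact Submodule.subset_span ⟨f u, f v, by simp⟩
  | zero => simpa using Submodule.zero_mem _
  | add x y _ _ hx hy => rw [map_add]; exact Submodule.add_mem _ hx hy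
  | smul a x _ hx => rw [map_smul]; exact Submodule.smul_mem _ _ hx

lemma mul'_mem_commSpan_of_alt {T : A ⊗[K] A} (hT : T ∈ altSpan K (A := A)) :
    LinearMap.mul' K A T ∈ commSpan K A := by
  induction hT using Submodule.span_induction with
  | mem x hx =>
      obtain ⟨u, v, rfl⟩ := hx
      rw [map_sub]
      simpa using mem_commSpan_mul K u v
  | zero => simpa using Submodule.zero_mem _
  | add x y _ _ hx hy => rw [map_add]; exact Submodule.add_mem _ hx hy
  | smul a x _ hx => rw [map_smul]; exact Submodule.smul_mem _ _ hx

variable {I : Type} {e : I → A}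

lemma br_add_br_swap_mem_altSpan (D : DoubleBracket K I A e) (x y : A) :
    D.br x y + D.br y x ∈ altSpan K (A := A) := by
  rw [D.skew y x, ← sub_eq_add_neg]
  exact sub_comm_mem_altSpan K _

lemma br_diag_mul_mem (D : DoubleBracket K I A e) (a b : A)
    (ha : D.br a a ∈ altSpan K (A := A)) (hb : D.br b b ∈ altSpan K (A := A)) :
    D.br (a * b) (a * b) ∈ altSpan K (A := A) := by
  have hg : ∀ T : A ⊗[K] A,
      outR K A b (TensorProduct.map LinearMap.id (LinearMap.mulLeft K a)
        ((TensorProduct.comm K A A) T))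
      = (TensorProduct.comm K A A)
          (outL K A a (TensorProduct.map (LinearMap.mulRight K b) LinearMap.id T)) := by
    intro T
    induction T using TensorProduct.induction_on with
    | zero => simp
    | tmul u v => simp [outR, outL, mul_assoc]
    | add x y hx hy => simp only [map_add, hx, hy]
  have h1 : ∀ T : A ⊗[K] A,
      outR K A b (TensorProduct.map (LinearMap.mulRight K b) LinearMap.id T)
        = TensorProduct.map (LinearMap.mulRight K b) (LinearMap.mulRight K b) T := by
    intro T
    induction T using TensorProduct.induction_on with
    | zero => simp
    | tmul u v => simp [outR]
    | add x y hx hy => simp only [map_add, hx, hy]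
  have h2 : ∀ T : A ⊗[K] A,
      outL K A a (TensorProduct.map LinearMap.id (LinearMap.mulLeft K a) T)
        = TensorProduct.map (LinearMap.mulLeft K a) (LinearMap.mulLeft K a) T := by
    intro T
    induction T using TensorProduct.induction_on with
    | zero => simp
    | tmul u v => simp [outL]
    | add x y hx hy => simp only [map_add, hx, hy]
  rw [D.leibniz (a * b) a b, br_fst K D a b a, br_fst K D a b b, D.skew b a]
  simp only [map_add, map_neg]
  rw [hg (D.br a b), h1 (D.br a a), h2 (D.br b b)]
  have hsum : ∀ X Y Z : A ⊗[K] A,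
      Y + -((TensorProduct.comm K A A) X) + (X + Z)
        = Y + (X - (TensorProduct.comm K A A) X) + Z := by
    intros; abel
  rw [hsum]
  exact Submodule.add_mem _
    (Submodule.add_mem _ (map_map_mem_altSpan K _ ha) (sub_comm_mem_altSpan K _))
    (map_map_mem_altSpan K _ hb)

end AuxAlt

section AuxQuiver

variable {V E : Type} [Fintype V] [DecidableEq V] [Fintype E] [DecidableEq E]
variable {Qs Qt : E → V}

lemma vtx_mul (i j : V) :
    vtx K V E Qs Qt i * vtx K V E Qs Qt j = if i = j then vtx K V E Qs Qt i else 0 := by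
  have h := RingQuot.mkAlgHom_rel K (PathRel.vert_mul (K := K) (Qs := Qs) (Qt := Qt) i j)
  rw [map_mul] at h
  rw [vtx, vtx, h]
  split
  · rfl
  · exact map_zero _

lemma vtx_sum : (Finset.univ.sum fun i : V => vtx K V E Qs Qt i) = 1 := by
  have h := RingQuot.mkAlgHom_rel K
    (PathRel.vert_sum (K := K) (V := V) (E := E) (Qs := Qs) (Qt := Qt))
  rw [map_sum, map_one] at h
  simpa [vtx] using h

lemma vtx_arr (x : E ⊕ E) :
    vtx K V E Qs Qt (tbar V E Qs Qt x) * arr K V E Qs Qt x = arr K V E Qs Qt x := by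
  have h := RingQuot.mkAlgHom_rel K (PathRel.arr_left (K := K) (Qs := Qs) (Qt := Qt) x)
  rw [map_mul] at h
  simpa [vtx, arr] using h

lemma arr_vtx (x : E ⊕ E) :
    arr K V E Qs Qt x * vtx K V E Qs Qt (sbar V E Qs Qt x) = arr K V E Qs Qt x := by
  have h := RingQuot.mkAlgHom_rel K (PathRel.arr_right (K := K) (Qs := Qs) (Qt := Qt) x)
  rw [map_mul] at h
  simpa [vtx, arr] using h

lemma arr_vtx' (x : E ⊕ E) (i : V) :
    arr K V E Qs Qt x * vtx K V E Qs Qt i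
      = if sbar V E Qs Qt x = i then arr K V E Qs Qt x else 0 := by
  conv_lhs => rw [← arr_vtx K x, mul_assoc, vtx_mul]
  split_ifs with h
  · exact arr_vtx K x
  · rw [mul_zero]

lemma vtx_arr' (i : V) (x : E ⊕ E) :
    vtx K V E Qs Qt i * arr K V E Qs Qt x
      = if i = tbar V E Qs Qt x then arr K V E Qs Qt x else 0 := by
  conv_lhs => rw [← vtx_arr K x, ← mul_assoc, vtx_mul]
  split_ifs with h
  · rw [h, vtx_arr]
  · rw [zero_mul]

lemma vtx_arr_inl (b : E) :
    vtx K V E Qs Qt (Qt b) * arr K V E Qs Qt (Sum.inl b) = arr K V E Qs Qt (Sum.inl b) := by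
  simpa [tbar] using vtx_arr K (Qs := Qs) (Qt := Qt) (Sum.inl b)

lemma vtx_arr_inr (b : E) :
    vtx K V E Qs Qt (Qs b) * arr K V E Qs Qt (Sum.inr b) = arr K V E Qs Qt (Sum.inr b) := by
  simpa [tbar] using vtx_arr K (Qs := Qs) (Qt := Qt) (Sum.inr b)

lemma arr_vtx_inl (b : E) :
    arr K V E Qs Qt (Sum.inl b) * vtx K V E Qs Qt (Qs b) = arr K V E Qs Qt (Sum.inl b) := by
  simpa [sbar] using arr_vtx K (Qs := Qs) (Qt := Qt) (Sum.inl b)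

lemma arr_vtx_inr (b : E) :
    arr K V E Qs Qt (Sum.inr b) * vtx K V E Qs Qt (Qt b) = arr K V E Qs Qt (Sum.inr b) := by
  simpa [sbar] using arr_vtx K (Qs := Qs) (Qt := Qt) (Sum.inr b)

lemma gen_top :
    Algebra.adjoin K (Set.range (vtx K V E Qs Qt) ∪ Set.range (arr K V E Qs Qt)) = ⊤ := by
  rw [eq_top_iff]
  rintro x -
  obtain ⟨y, rfl⟩ := RingQuot.mkAlgHom_surjective K (PathRel K V E Qs Qt) x
  induction y using FreeAlgebra.induction with
  | grade0 r =>
      rw [AlgHom.commutes]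
      exact Subalgebra.algebraMap_mem _ r
  | grade1 z =>
      cases z with
      | inl i => exact Algebra.subset_adjoin (Or.inl ⟨i, rfl⟩)
      | inr x => exact Algebra.subset_adjoin (Or.inr ⟨x, rfl⟩)
  | mul a b ha hb => rw [map_mul]; exact mul_mem ha hb
  | add a b ha hb => rw [map_add]; exact add_mem ha hb

end AuxQuiver

section AuxMoment

variable {V E : Type} [Fintype V] [DecidableEq V] [Fintype E] [DecidableEq E]
variable {Qs Qt : E → V}
variable (D : DoubleBracket K V (PathAlg K V E Qs Qt) (vtx K V E Qs Qt))

lemma br_w_arr (hD : IsQuiverBracket K V E Qs Qt D) (x : E ⊕ E) :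
    D.br (ncw K V E Qs Qt) (arr K V E Qs Qt x)
      = arr K V E Qs Qt x ⊗ₜ[K] vtx K V E Qs Qt (sbar V E Qs Qt x)
        - vtx K V E Qs Qt (tbar V E Qs Qt x) ⊗ₜ[K] arr K V E Qs Qt x := by
  obtain ⟨hD1, hD2, hD3⟩ := hD
  have hexp : D.br (ncw K V E Qs Qt) (arr K V E Qs Qt x)
      = Finset.univ.sum fun a : E =>
          ((TensorProduct.map (LinearMap.mulRight K (arr K V E Qs Qt (Sum.inr a)))
              LinearMap.id (D.br (arr K V E Qs Qt (Sum.inl a)) (arr K V E Qs Qt x))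
            + TensorProduct.map LinearMap.id
                (LinearMap.mulLeft K (arr K V E Qs Qt (Sum.inl a)))
                (D.br (arr K V E Qs Qt (Sum.inr a)) (arr K V E Qs Qt x)))
          - (TensorProduct.map (LinearMap.mulRight K (arr K V E Qs Qt (Sum.inl a)))
              LinearMap.id (D.br (arr K V E Qs Qt (Sum.inr a)) (arr K V E Qs Qt x))
            + TensorProduct.map LinearMap.id
                (LinearMap.mulLeft K (arr K V E Qs Qt (Sum.inr a)))
                (D.br (arr K V E Qs Qt (Sum.inl a)) (arr K V E Qs Qt x)))) := by
    rw [ncw, map_sum, LinearMap.sum_apply]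
    refine Finset.sum_congr rfl fun a _ => ?_
    rw [map_sub, LinearMap.sub_apply, br_fst K D, br_fst K D]
  cases x with
  | inl b =>
      rw [hexp, Finset.sum_eq_single b]
      · rw [hD3 (Sum.inl b) (Sum.inl b) (by simp [dstar]), hD2 b]
        simp only [map_zero, map_neg, TensorProduct.map_tmul, LinearMap.mulRight_apply,
          LinearMap.mulLeft_apply, LinearMap.id_coe, id_eq, sbar, tbar, Sum.elim_inl,
          arr_vtx_inl, vtx_arr_inl, zero_add, add_zero]
        have aux : ∀ (A : Type) [Ring A] [Algebra K A] (x y z : A), x * y = y →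
            -(x ⊗ₜ[K] y) - TensorProduct.map (LinearMap.mulRight K y) LinearMap.id (-(x ⊗ₜ[K] z))
              = y ⊗ₜ[K] z - x ⊗ₜ[K] y := by
          intro A _ _ x y z h
          simp [h]
          abel
        exact aux _ _ _ _ (vtx_arr_inl K b)
      · intro a _ hab
        rw [hD3 (Sum.inl a) (Sum.inl b) (by simp [dstar]),
          hD3 (Sum.inr a) (Sum.inl b) (by simp [dstar, hab])]
        simp
      · intro h
        exact absurd (Finset.mem_univ b) h
  | inr b =>
      rw [hexp, Finset.sum_eq_single b]
      · rw [hD3 (Sum.inr b) (Sum.inr b) (by simp [dstar]), hD1 b]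
        simp only [map_zero, map_neg, TensorProduct.map_tmul, LinearMap.mulRight_apply,
          LinearMap.mulLeft_apply, LinearMap.id_coe, id_eq, sbar, tbar, Sum.elim_inr,
          arr_vtx_inr, vtx_arr_inr, zero_add, add_zero]
      · intro a _ hab
        rw [hD3 (Sum.inl a) (Sum.inr b) (by simp [dstar, hab]),
          hD3 (Sum.inr a) (Sum.inr b) (by simp [dstar])]
        simp
      · intro h
        exact absurd (Finset.mem_univ b) h

lemma rhs_arr (x : E ⊕ E) :
    (Finset.univ.sum fun i : V =>
        (arr K V E Qs Qt x * vtx K V E Qs Qt i) ⊗ₜ[K] vtx K V E Qs Qt i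
          - vtx K V E Qs Qt i ⊗ₜ[K] (vtx K V E Qs Qt i * arr K V E Qs Qt x))
      = arr K V E Qs Qt x ⊗ₜ[K] vtx K V E Qs Qt (sbar V E Qs Qt x)
        - vtx K V E Qs Qt (tbar V E Qs Qt x) ⊗ₜ[K] arr K V E Qs Qt x := by
  rw [Finset.sum_sub_distrib (G := PathAlg K V E Qs Qt ⊗[K] PathAlg K V E Qs Qt)]
  congr 1
  · rw [Finset.sum_eq_single (sbar V E Qs Qt x)]
    · rw [arr_vtx]
    · intro i _ hne
      rw [arr_vtx', if_neg fun h => hne h.symm, TensorProduct.zero_tmul]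
    · intro h
      exact absurd (Finset.mem_univ _) h
  · rw [Finset.sum_eq_single (tbar V E Qs Qt x)]
    · rw [vtx_arr]
    · intro i _ hne
      rw [vtx_arr', if_neg hne, TensorProduct.tmul_zero]
    · intro h
      exact absurd (Finset.mem_univ _) h

lemma momentMap (hD : IsQuiverBracket K V E Qs Qt D) (p : PathAlg K V E Qs Qt) :
    D.br (ncw K V E Qs Qt) p
      = Finset.univ.sum fun i : V =>
          ((p * vtx K V E Qs Qt i) ⊗ₜ[K] vtx K V E Qs Qt i
            - vtx K V E Qs Qt i ⊗ₜ[K] (vtx K V E Qs Qt i * p)) := by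
  have hp : p ∈ Algebra.adjoin K
      (Set.range (vtx K V E Qs Qt) ∪ Set.range (arr K V E Qs Qt)) := by
    rw [gen_top K]
    exact trivial
  induction hp using Algebra.adjoin_induction with
  | mem q hq =>
      rcases hq with ⟨i, rfl⟩ | ⟨x, rfl⟩
      · -- q = vtx i
        rw [D.skew (ncw K V E Qs Qt) (vtx K V E Qs Qt i), D.e_vanish i, map_zero, neg_zero]
        rw [Finset.sum_sub_distrib (G := PathAlg K V E Qs Qt ⊗[K] PathAlg K V E Qs Qt)]
        have h1 : (Finset.univ.sum fun i' : V =>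
            (vtx K V E Qs Qt i * vtx K V E Qs Qt i') ⊗ₜ[K] vtx K V E Qs Qt i')
            = vtx K V E Qs Qt i ⊗ₜ[K] vtx K V E Qs Qt i := by
          rw [Finset.sum_eq_single i]
          · rw [vtx_mul, if_pos rfl]
          · intro j _ hne
            rw [vtx_mul, if_neg fun h => hne h.symm, TensorProduct.zero_tmul]
          · intro h
            exact absurd (Finset.mem_univ _) h
        have h2 : (Finset.univ.sum fun i' : V =>
            vtx K V E Qs Qt i' ⊗ₜ[K] (vtx K V E Qs Qt i' * vtx K V E Qs Qt i))
            = vtx K V E Qs Qt i ⊗ₜ[K] vtx K V E Qs Qt i := by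
          rw [Finset.sum_eq_single i]
          · rw [vtx_mul, if_pos rfl]
          · intro j _ hne
            rw [vtx_mul, if_neg hne, TensorProduct.tmul_zero]
          · intro h
            exact absurd (Finset.mem_univ _) h
        rw [h1, h2, sub_self]
      · -- q = arr x
        rw [br_w_arr K D hD x, rhs_arr K x]
  | algebraMap r =>
      rw [Algebra.algebraMap_eq_smul_one, map_smul, br_one_right K D, smul_zero]
      rw [Finset.sum_congr rfl (fun i _ => ?_), Finset.sum_const_zero]
      rw [smul_mul_assoc, one_mul, mul_smul_comm, mul_one, ← TensorProduct.smul_tmul',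
        TensorProduct.tmul_smul, sub_self]
  | add q r hq' hr' hq hr =>
      rw [map_add, hq, hr, ← Finset.sum_add_distrib]
      refine Finset.sum_congr rfl fun i _ => ?_
      rw [add_mul, mul_add, TensorProduct.add_tmul, TensorProduct.tmul_add]
      abel
  | mul q r hq' hr' hq hr =>
      rw [D.leibniz (ncw K V E Qs Qt) q r, hq, hr, map_sum, map_sum,
        ← Finset.sum_add_distrib]
      refine Finset.sum_congr rfl fun i _ => ?_
      simp only [map_sub, outR, outL, TensorProduct.map_tmul, LinearMap.mulRight_apply,
        LinearMap.mulLeft_apply, LinearMap.id_coe, id_eq, mul_assoc]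
      abel

end AuxMoment

section AuxSwap

variable {A : Type} [Ring A] [Algebra K A] {I : Type} {e : I → A}

lemma mul'_br_add_swap_mem (D : DoubleBracket K I A e) (x b : A) :
    LinearMap.mul' K A (D.br x b) + LinearMap.mul' K A (D.br b x) ∈ commSpan K A := by
  rw [D.skew x b, map_neg]
  have h2 : -(LinearMap.mul' K A ((TensorProduct.comm K A A) (D.br b x)))
      + LinearMap.mul' K A (D.br b x)
      = -(LinearMap.mul' K A ((TensorProduct.comm K A A) (D.br b x))
          - LinearMap.mul' K A (D.br b x)) := by abel
  rw [h2]
  exact Submodule.neg_mem _ (mul'_comm_sub K (D.br b x))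

lemma mem_wspan_outR_outR (w0 v : A) (T : A ⊗[K] A) :
    LinearMap.mul' K A (outR K A v (outR K A w0 T))
      ∈ Submodule.span K {x : A | ∃ u u' : A, x = u * w0 * u'} := by
  induction T using TensorProduct.induction_on with
  | zero => simpa using Submodule.zero_mem _
  | tmul s t =>
      refine Submodule.subset_span ⟨s * t, v, ?_⟩
      simp [outR, mul_assoc]
  | add x y hx hy =>
      rw [map_add, map_add, map_add]
      exact Submodule.add_mem _ hx hy

lemma mem_wspan_outL (w0 u : A) (T : A ⊗[K] A) :
    LinearMap.mul' K A (outL K A (u * w0) T)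
      ∈ Submodule.span K {x : A | ∃ a b : A, x = a * w0 * b} := by
  induction T using TensorProduct.induction_on with
  | zero => simpa using Submodule.zero_mem _
  | tmul s t =>
      refine Submodule.subset_span ⟨u, s * t, ?_⟩
      simp [outL, mul_assoc]
  | add x y hx hy =>
      rw [map_add, map_add]
      exact Submodule.add_mem _ hx hy

end AuxSwap

section AuxRed

variable {V E : Type} [Fintype V] [DecidableEq V] [Fintype E] [DecidableEq E]
variable {Qs Qt : E → V}
variable (D : DoubleBracket K V (PathAlg K V E Qs Qt) (vtx K V E Qs Qt))

lemma br_w_right (hD : IsQuiverBracket K V E Qs Qt D) (b : PathAlg K V E Qs Qt) :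
    D.br b (ncw K V E Qs Qt)
      = Finset.univ.sum fun i : V =>
          ((vtx K V E Qs Qt i * b) ⊗ₜ[K] vtx K V E Qs Qt i
            - vtx K V E Qs Qt i ⊗ₜ[K] (b * vtx K V E Qs Qt i)) := by
  rw [D.skew b (ncw K V E Qs Qt), momentMap K D hD b, map_sum, ← Finset.sum_neg_distrib]
  refine Finset.sum_congr rfl fun i _ => ?_
  rw [map_sub, TensorProduct.comm_tmul, TensorProduct.comm_tmul, neg_sub]

lemma mid_vanish (hD : IsQuiverBracket K V E Qs Qt D) (b u v : PathAlg K V E Qs Qt) :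
    LinearMap.mul' K (PathAlg K V E Qs Qt)
      (outR K (PathAlg K V E Qs Qt) v
        (outL K (PathAlg K V E Qs Qt) u (D.br b (ncw K V E Qs Qt)))) = 0 := by
  rw [br_w_right K D hD b, map_sum, map_sum, map_sum]
  refine Finset.sum_eq_zero fun i _ => ?_
  simp [outR, outL, mul_assoc]

lemma br_mem_redSpan_right (hD : IsQuiverBracket K V E Qs Qt D) (b y : PathAlg K V E Qs Qt)
    (hy : y ∈ redSpan K (PathAlg K V E Qs Qt) (ncw K V E Qs Qt)) :
    LinearMap.mul' K (PathAlg K V E Qs Qt) (D.br b y)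
      ∈ redSpan K (PathAlg K V E Qs Qt) (ncw K V E Qs Qt) := by
  rcases Submodule.mem_sup.mp hy with ⟨y1, hy1, y2, hy2, rfl⟩
  rw [map_add, map_add]
  refine Submodule.add_mem _ ?_ ?_
  · refine SetLike.le_def.mp (le_sup_left :
      commSpan K (PathAlg K V E Qs Qt) ≤ redSpan K (PathAlg K V E Qs Qt) (ncw K V E Qs Qt)) ?_
    clear hy
    induction hy1 using Submodule.span_induction with
    | mem z hz =>
        obtain ⟨a, c, rfl⟩ := hz
        rw [map_sub, map_sub, D.leibniz b a c, D.leibniz b c a, map_add, map_add]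
        have h := mul'_outR_sub_outL K c (D.br b a)
        have h' := mul'_outR_sub_outL K a (D.br b c)
        have hre : LinearMap.mul' K (PathAlg K V E Qs Qt) (outR K (PathAlg K V E Qs Qt) c (D.br b a))
              + LinearMap.mul' K (PathAlg K V E Qs Qt) (outL K (PathAlg K V E Qs Qt) a (D.br b c))
            - (LinearMap.mul' K (PathAlg K V E Qs Qt) (outR K (PathAlg K V E Qs Qt) a (D.br b c))
              + LinearMap.mul' K (PathAlg K V E Qs Qt) (outL K (PathAlg K V E Qs Qt) c (D.br b a)))
            = (LinearMap.mul' K (PathAlg K V E Qs Qt) (outR K (PathAlg K V E Qs Qt) c (D.br b a))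
              - LinearMap.mul' K (PathAlg K V E Qs Qt) (outL K (PathAlg K V E Qs Qt) c (D.br b a)))
            - (LinearMap.mul' K (PathAlg K V E Qs Qt) (outR K (PathAlg K V E Qs Qt) a (D.br b c))
              - LinearMap.mul' K (PathAlg K V E Qs Qt) (outL K (PathAlg K V E Qs Qt) a (D.br b c))) := by
          abel
        rw [hre]
        exact Submodule.sub_mem _ h h'
    | zero => simpa using Submodule.zero_mem _
    | add x y _ _ hx hy => rw [map_add, map_add]; exact Submodule.add_mem _ hx hy
    | smul a x _ hx => rw [map_smul, map_smul]; exact Submodule.smul_mem _ _ hx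
  · clear hy
    induction hy2 using Submodule.span_induction with
    | mem z hz =>
        obtain ⟨u, v, rfl⟩ := hz
        rw [D.leibniz b (u * ncw K V E Qs Qt) v, D.leibniz b u (ncw K V E Qs Qt),
          map_add, map_add, map_add]
        refine Submodule.add_mem _ (Submodule.add_mem _ ?_ ?_) ?_
        · exact SetLike.le_def.mp le_sup_right
            (mem_wspan_outR_outR K (ncw K V E Qs Qt) v (D.br b u))
        · rw [mid_vanish K D hD b u v]
          exact Submodule.zero_mem _
        · exact SetLike.le_def.mp le_sup_right (mem_wspan_outL K (ncw K V E Qs Qt) u (D.br b v))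
    | zero => simpa using Submodule.zero_mem _
    | add x y _ _ hx hy => rw [map_add, map_add]; exact Submodule.add_mem _ hx hy
    | smul a x _ hx => rw [map_smul, map_smul]; exact Submodule.smul_mem _ _ hx

lemma br_mem_redSpan_left (hD : IsQuiverBracket K V E Qs Qt D)
    (x : PathAlg K V E Qs Qt) (hx : x ∈ redSpan K (PathAlg K V E Qs Qt) (ncw K V E Qs Qt))
    (b : PathAlg K V E Qs Qt) :
    LinearMap.mul' K (PathAlg K V E Qs Qt) (D.br x b)
      ∈ redSpan K (PathAlg K V E Qs Qt) (ncw K V E Qs Qt) := by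
  have h1 := mul'_br_add_swap_mem K D x b
  have h2 := br_mem_redSpan_right K D hD b x hx
  have h3 : LinearMap.mul' K (PathAlg K V E Qs Qt) (D.br x b)
      = (LinearMap.mul' K (PathAlg K V E Qs Qt) (D.br x b)
          + LinearMap.mul' K (PathAlg K V E Qs Qt) (D.br b x))
        - LinearMap.mul' K (PathAlg K V E Qs Qt) (D.br b x) := by abel
  rw [h3]
  exact Submodule.sub_mem _ (SetLike.le_def.mp le_sup_left h1) h2

lemma br_diag_mem (hD : IsQuiverBracket K V E Qs Qt D) (a : PathAlg K V E Qs Qt) :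
    D.br a a ∈ altSpan K (A := PathAlg K V E Qs Qt) := by
  have hp : a ∈ Algebra.adjoin K
      (Set.range (vtx K V E Qs Qt) ∪ Set.range (arr K V E Qs Qt)) := by
    rw [gen_top K]
    exact trivial
  induction hp using Algebra.adjoin_induction with
  | mem q hq =>
      rcases hq with ⟨i, rfl⟩ | ⟨x, rfl⟩
      · rw [D.e_vanish i]
        exact Submodule.zero_mem _
      · rw [hD.2.2 x x (by cases x <;> simp [dstar])]
        exact Submodule.zero_mem _
  | algebraMap r =>
      simp only [Algebra.algebraMap_eq_smul_one, map_smul, LinearMap.smul_apply,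
        br_one_left K D, smul_zero]
      exact Submodule.zero_mem _
  | add x y hx' hy' hx hy =>
      have hexp : D.br (x + y) (x + y)
          = D.br x x + D.br y y + (D.br x y + D.br y x) := by
        simp only [map_add, LinearMap.add_apply]
        abel
      rw [hexp]
      exact Submodule.add_mem _ (Submodule.add_mem _ hx hy)
        (br_add_br_swap_mem_altSpan K D x y)
  | mul x y hx' hy' hx hy => exact br_diag_mul_mem K D x y hx hy

end AuxRed

section Neck

variable {A : Type} [Ring A] [Algebra K A] {I : Type} {e : I → A}
variable (N : Submodule K A)

/-- `ν(x ⊗ y ⊗ z) = class of xyz` in `A/N`. -/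
def nu : A ⊗[K] (A ⊗[K] A) →ₗ[K] A ⧸ N :=
  N.mkQ ∘ₗ LinearMap.mul' K A ∘ₗ TensorProduct.map LinearMap.id (LinearMap.mul' K A)

lemma nu_tmul (x y z : A) : nu K N (x ⊗ₜ[K] (y ⊗ₜ[K] z)) = N.mkQ (x * (y * z)) := by
  simp [nu]

lemma nu_cyc (hN : commSpan K A ≤ N) (T : A ⊗[K] (A ⊗[K] A)) :
    nu K N (cyc132 K A T) = nu K N T := by
  induction T using TensorProduct.induction_on with
  | zero => simp
  | tmul x yz =>
      induction yz using TensorProduct.induction_on with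
      | zero => simp
      | tmul y z =>
          have hc : cyc132 K A (x ⊗ₜ[K] (y ⊗ₜ[K] z)) = y ⊗ₜ[K] (z ⊗ₜ[K] x) := by
            simp [cyc132]
          rw [hc, nu_tmul, nu_tmul, Submodule.mkQ_apply, Submodule.mkQ_apply]
          refine (Submodule.Quotient.eq N).mpr ?_
          have h2 : y * (z * x) - x * (y * z) = (y * z) * x - x * (y * z) := by
            rw [mul_assoc]
          rw [h2]
          exact hN (mem_commSpan_mul K (y * z) x)
      | add u v hu hv =>
          rw [TensorProduct.tmul_add, map_add, map_add, map_add, hu, hv]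
  | add S T hS hT => rw [map_add, map_add, map_add, hS, hT]

lemma nu_assocR (t : A) (T' : A ⊗[K] A) :
    nu K N ((TensorProduct.assoc K A A A) (T' ⊗ₜ[K] t))
      = N.mkQ (LinearMap.mul' K A (outR K A t T')) := by
  induction T' using TensorProduct.induction_on with
  | zero => simp
  | tmul p q => simp [outR, nu]
  | add x y hx hy => simp only [TensorProduct.add_tmul, map_add, hx, hy]

lemma nu_assocL (hN : commSpan K A ≤ N) (s : A) (T' : A ⊗[K] A) :
    nu K N ((TensorProduct.assoc K A A A) (T' ⊗ₜ[K] s))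
      = N.mkQ (LinearMap.mul' K A (outL K A s T')) := by
  induction T' using TensorProduct.induction_on with
  | zero => simp
  | tmul p q =>
      rw [TensorProduct.assoc_tmul, nu_tmul]
      have h1 : LinearMap.mul' K A (outL K A s (p ⊗ₜ[K] q)) = (s * p) * q := by
        simp [outL]
      rw [h1, Submodule.mkQ_apply, Submodule.mkQ_apply]
      refine (Submodule.Quotient.eq N).mpr ?_
      have h2 : p * (q * s) - (s * p) * q = (p * q) * s - s * (p * q) := by
        rw [mul_assoc, mul_assoc]
      rw [h2]
      exact hN (mem_commSpan_mul K (p * q) s)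
  | add x y hx hy => simp only [TensorProduct.add_tmul, map_add, hx, hy]

lemma brExtL_tmul (f : A →ₗ[K] A ⊗[K] A) (s t : A) :
    brExtL K A f (s ⊗ₜ[K] t) = (TensorProduct.assoc K A A A) ((f s) ⊗ₜ[K] t) := by
  simp [brExtL]

lemma nu_br (D : DoubleBracket K I A e) (hN : commSpan K A ≤ N) (a : A) (T : A ⊗[K] A) :
    N.mkQ (LinearMap.mul' K A (D.br a (LinearMap.mul' K A T)))
      = nu K N (brExtL K A (D.br a) T)
        + nu K N (brExtL K A (D.br a) ((TensorProduct.comm K A A) T)) := by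
  induction T using TensorProduct.induction_on with
  | zero => simp
  | tmul s t =>
      rw [LinearMap.mul'_apply, D.leibniz a s t, map_add, map_add,
        TensorProduct.comm_tmul, brExtL_tmul, brExtL_tmul, nu_assocR K N t (D.br a s),
        nu_assocL K N hN s (D.br a t)]
  | add X Y hX hY =>
      simp only [map_add, hX, hY]
      abel

lemma jacobi_mkQ (D : DoubleBracket K I A e) (hN : commSpan K A ≤ N) (a b c : A) :
    N.mkQ (LinearMap.mul' K A (D.br a (LinearMap.mul' K A (D.br b c))))
      = N.mkQ (LinearMap.mul' K A (D.br (LinearMap.mul' K A (D.br a b)) c))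
        + N.mkQ (LinearMap.mul' K A (D.br b (LinearMap.mul' K A (D.br a c)))) := by
  have hswap : ∀ x y : A,
      N.mkQ (LinearMap.mul' K A (D.br x y)) = - N.mkQ (LinearMap.mul' K A (D.br y x)) := by
    intro x y
    have h0 : N.mkQ (LinearMap.mul' K A (D.br x y) + LinearMap.mul' K A (D.br y x)) = 0 :=
      (Submodule.Quotient.mk_eq_zero N).mpr (hN (mul'_br_add_swap_mem K D x y))
    rw [map_add] at h0
    exact eq_neg_of_add_eq_zero_left h0
  have hcomm : ∀ x y : A,
      (TensorProduct.comm K A A) (D.br x y) = - D.br y x := by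
    intro x y
    rw [D.skew y x, neg_neg]
  have key : ∀ x y z : A,
      N.mkQ (LinearMap.mul' K A (D.br x (LinearMap.mul' K A (D.br y z))))
        = nu K N (brExtL K A (D.br x) (D.br y z))
          - nu K N (brExtL K A (D.br x) (D.br z y)) := by
    intro x y z
    rw [nu_br K N D hN x (D.br y z), hcomm y z, map_neg, map_neg, ← sub_eq_add_neg]
  rw [key a b c, hswap (LinearMap.mul' K A (D.br a b)) c, key c a b, key b a c]
  have j1 := congrArg (nu K N) (D.jacobi a b c)
  have j2 := congrArg (nu K N) (D.jacobi a c b)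
  simp only [map_add, map_zero, nu_cyc K N hN] at j1 j2
  have e1 : nu K N (brExtL K A (D.br a) (D.br b c))
      = -(nu K N (brExtL K A (D.br c) (D.br a b))
          + nu K N (brExtL K A (D.br b) (D.br c a))) :=
    eq_neg_of_add_eq_zero_left (by rw [← add_assoc]; exact j1)
  have e2 : nu K N (brExtL K A (D.br a) (D.br c b))
      = -(nu K N (brExtL K A (D.br b) (D.br a c))
          + nu K N (brExtL K A (D.br c) (D.br b a))) :=
    eq_neg_of_add_eq_zero_left (by rw [← add_assoc]; exact j2)
  rw [e1, e2]
  abel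

end Neck

theorem statement7
    (V E : Type) [Fintype V] [DecidableEq V] [Fintype E] [DecidableEq E]
    (Qs Qt : E → V)
    (D : DoubleBracket K V (PathAlg K V E Qs Qt) (vtx K V E Qs Qt))
    (hD : IsQuiverBracket K V E Qs Qt D) :
    -- (1) `w` is a noncommutative moment map:
    (∀ p : PathAlg K V E Qs Qt,
      D.br (ncw K V E Qs Qt) p
        = Finset.univ.sum fun i : V =>
            ((p * vtx K V E Qs Qt i) ⊗ₜ[K] vtx K V E Qs Qt i
              - vtx K V E Qs Qt i ⊗ₜ[K] (vtx K V E Qs Qt i * p)))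
    -- (2) the necklace bracket preserves the kernel of HH₀(𝕂Q̄) → HH₀(ΠQ) ...
    ∧ (∀ x ∈ redSpan K (PathAlg K V E Qs Qt) (ncw K V E Qs Qt),
        ∀ b : PathAlg K V E Qs Qt,
          LinearMap.mul' K _ (D.br x b)
            ∈ redSpan K (PathAlg K V E Qs Qt) (ncw K V E Qs Qt))
    -- ... and hence descends to a Lie bracket on HH₀(ΠQ) for which the projection
    -- is a Lie algebra homomorphism:
    ∧ (∃! B' :
          (PathAlg K V E Qs Qt ⧸ redSpan K (PathAlg K V E Qs Qt) (ncw K V E Qs Qt))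
          →ₗ[K] (PathAlg K V E Qs Qt ⧸ redSpan K (PathAlg K V E Qs Qt) (ncw K V E Qs Qt))
          →ₗ[K] (PathAlg K V E Qs Qt ⧸ redSpan K (PathAlg K V E Qs Qt) (ncw K V E Qs Qt)),
        (∀ a b : PathAlg K V E Qs Qt,
          B' ((redSpan K _ (ncw K V E Qs Qt)).mkQ a) ((redSpan K _ (ncw K V E Qs Qt)).mkQ b)
            = (redSpan K _ (ncw K V E Qs Qt)).mkQ (LinearMap.mul' K _ (D.br a b)))
        ∧ (∀ x, B' x x = 0)
        ∧ (∀ x y z, B' x (B' y z) = B' (B' x y) z + B' y (B' x z))) := by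
  refine ⟨momentMap K D hD, fun x hx b => br_mem_redSpan_left K D hD x hx b, ?_⟩
  set N := redSpan K (PathAlg K V E Qs Qt) (ncw K V E Qs Qt) with hNdef
  have hNle : commSpan K (PathAlg K V E Qs Qt) ≤ N := le_sup_left
  set L : PathAlg K V E Qs Qt →ₗ[K] PathAlg K V E Qs Qt →ₗ[K]
      (PathAlg K V E Qs Qt ⧸ N) :=
    D.br.compr₂ (N.mkQ ∘ₗ LinearMap.mul' K (PathAlg K V E Qs Qt)) with hLdef
  have hL : ∀ a b : PathAlg K V E Qs Qt,
      L a b = N.mkQ (LinearMap.mul' K (PathAlg K V E Qs Qt) (D.br a b)) := fun a b => rfl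
  have hker2 : N ≤ LinearMap.ker L.flip := by
    intro y hy
    rw [LinearMap.mem_ker]
    apply LinearMap.ext
    intro a
    rw [LinearMap.flip_apply, LinearMap.zero_apply, hL, Submodule.mkQ_apply]
    exact (Submodule.Quotient.mk_eq_zero _).mpr (br_mem_redSpan_right K D hD a y hy)
  set B1 := N.liftQ L.flip hker2 with hB1def
  have hker1 : N ≤ LinearMap.ker B1.flip := by
    intro x hx
    rw [LinearMap.mem_ker]
    apply LinearMap.ext
    intro q
    obtain ⟨y, rfl⟩ := N.mkQ_surjective q
    rw [LinearMap.flip_apply, LinearMap.zero_apply, hB1def, Submodule.mkQ_apply,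
      Submodule.liftQ_apply, LinearMap.flip_apply, hL, Submodule.mkQ_apply]
    exact (Submodule.Quotient.mk_eq_zero _).mpr (br_mem_redSpan_left K D hD x hx y)
  have hB : ∀ a b : PathAlg K V E Qs Qt,
      (N.liftQ B1.flip hker1) (N.mkQ a) (N.mkQ b)
        = N.mkQ (LinearMap.mul' K (PathAlg K V E Qs Qt) (D.br a b)) := by
    intro a b
    rw [Submodule.mkQ_apply, Submodule.liftQ_apply, LinearMap.flip_apply, hB1def,
      Submodule.mkQ_apply, Submodule.liftQ_apply, LinearMap.flip_apply, hL]
  refine ⟨N.liftQ B1.flip hker1, ⟨fun a b => hB a b, ?_, ?_⟩, ?_⟩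
  · -- alternating
    intro x
    obtain ⟨a, rfl⟩ := N.mkQ_surjective x
    rw [hB a a, Submodule.mkQ_apply]
    exact (Submodule.Quotient.mk_eq_zero _).mpr
      (hNle (mul'_mem_commSpan_of_alt K (br_diag_mem K D hD a)))
  · -- Jacobi
    intro x y z
    obtain ⟨a, rfl⟩ := N.mkQ_surjective x
    obtain ⟨b, rfl⟩ := N.mkQ_surjective y
    obtain ⟨c, rfl⟩ := N.mkQ_surjective z
    rw [hB b c, hB a c, hB a b, hB a _, hB _ c, hB b _]
    exact jacobi_mkQ K N D hNle a b c
  · -- uniqueness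
    rintro B2 ⟨h1, -, -⟩
    apply LinearMap.ext
    intro x
    obtain ⟨a, rfl⟩ := N.mkQ_surjective x
    apply LinearMap.ext
    intro q
    obtain ⟨b, rfl⟩ := N.mkQ_surjective q
    rw [h1 a b, hB a b]

end
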